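/- (Equality part of Corollary 3.1.) Let n ≥ 1 and let F : 𝒦ⁿ → [0,∞) be positively homogeneous, increasing and concave, and assume in addition that F is strictly increasing on 𝒦ⁿₒ. Let p ∈ (1,∞) and K, L ∈ 𝒦ⁿₒ. Then F(K +_p L)^p = F(K)^p + F(L)^p holds if and only if K and L are dilates. -/

import Mathlib

open scoped Pointwise RealInnerProductSpace

/-- A convex body in `ℝⁿ`: a compact convex set with nonempty interior. -/
def IsConvexBody {n : ℕ} (K : Set (EuclideanSpace ℝ (Fin n))) : Prop :=
  IsCompact K ∧ Convex ℝ K ∧ (interior K).Nonempty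

/-- A convex body containing the origin in its interior. -/
def IsConvexBodyO {n : ℕ} (K : Set (EuclideanSpace ℝ (Fin n))) : Prop :=
  IsCompact K ∧ Convex ℝ K ∧ (0 : EuclideanSpace ℝ (Fin n)) ∈ interior K

/-- The support function of a set: `h_K(u) = sup { ⟪x, u⟫ : x ∈ K }`. -/
noncomputable def supp {n : ℕ} (K : Set (EuclideanSpace ℝ (Fin n)))
    (u : EuclideanSpace ℝ (Fin n)) : ℝ :=
  sSup ((fun x => ⟪x, u⟫) '' K)

section Helpers

variable {n : ℕ} {K A B : Set (EuclideanSpace ℝ (Fin n))}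
  {u : EuclideanSpace ℝ (Fin n)} {c : ℝ}

private lemma inner_cont (u : EuclideanSpace ℝ (Fin n)) :
    Continuous fun x : EuclideanSpace ℝ (Fin n) => ⟪x, u⟫ :=
  continuous_id.inner continuous_const

lemma le_supp (hK : IsCompact K) {x : EuclideanSpace ℝ (Fin n)} (hx : x ∈ K) :
    ⟪x, u⟫ ≤ supp K u :=
  le_csSup ((hK.image (inner_cont u)).bddAbove) ⟨x, hx, rfl⟩

lemma supp_exists (hK : IsCompact K) (hne : K.Nonempty) (u : EuclideanSpace ℝ (Fin n)) :
    ∃ x ∈ K, supp K u = ⟪x, u⟫ ∧ ∀ y ∈ K, ⟪y, u⟫ ≤ ⟪x, u⟫ := by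
  obtain ⟨x, hx, hmax⟩ := hK.exists_isMaxOn hne (inner_cont u).continuousOn
  have hub : ∀ y ∈ K, ⟪y, u⟫ ≤ ⟪x, u⟫ := fun y hy => isMaxOn_iff.mp hmax y hy
  refine ⟨x, hx, ?_, hub⟩
  apply IsGreatest.csSup_eq
  exact ⟨⟨x, hx, rfl⟩, by rintro _ ⟨y, hy, rfl⟩; exact hub y hy⟩

lemma supp_nonneg (hK : IsCompact K) (h0 : (0 : EuclideanSpace ℝ (Fin n)) ∈ K) :
    0 ≤ supp K u := by
  simpa using le_supp hK h0

lemma supp_zero (hne : K.Nonempty) : supp K (0 : EuclideanSpace ℝ (Fin n)) = 0 := by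
  have : (fun x : EuclideanSpace ℝ (Fin n) => ⟪x, (0 : EuclideanSpace ℝ (Fin n))⟫) '' K = {0} := by
    have : (fun x : EuclideanSpace ℝ (Fin n) => ⟪x, (0 : EuclideanSpace ℝ (Fin n))⟫)
        = fun _ => (0 : ℝ) := by funext x; exact inner_zero_right x
    rw [this]
    exact hne.image_const 0
  rw [supp, this, csSup_singleton]

lemma supp_smul (hc : 0 < c) (hK : IsCompact K) (hne : K.Nonempty)
    (u : EuclideanSpace ℝ (Fin n)) : supp (c • K) u = c * supp K u := by
  obtain ⟨x, hx, hsx, hub⟩ := supp_exists hK hne u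
  have hg : IsGreatest ((fun x => ⟪x, u⟫) '' (c • K)) (c * ⟪x, u⟫) := by
    constructor
    · exact ⟨c • x, Set.smul_mem_smul_set hx, real_inner_smul_left x u c⟩
    · rintro _ ⟨y, hy, rfl⟩
      obtain ⟨w, hw, rfl⟩ := hy
      show ⟪c • w, u⟫ ≤ c * ⟪x, u⟫
      rw [real_inner_smul_left]
      exact mul_le_mul_of_nonneg_left (hub w hw) hc.le
  rw [supp, hg.csSup_eq, hsx]

lemma supp_add (hA : IsCompact A) (hAne : A.Nonempty) (hB : IsCompact B) (hBne : B.Nonempty)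
    (u : EuclideanSpace ℝ (Fin n)) : supp (A + B) u = supp A u + supp B u := by
  obtain ⟨x, hx, hsx, hubx⟩ := supp_exists hA hAne u
  obtain ⟨y, hy, hsy, huby⟩ := supp_exists hB hBne u
  have hg : IsGreatest ((fun x => ⟪x, u⟫) '' (A + B)) (⟪x, u⟫ + ⟪y, u⟫) := by
    constructor
    · exact ⟨x + y, Set.add_mem_add hx hy, inner_add_left x y u⟩
    · rintro _ ⟨z, hz, rfl⟩
      rw [Set.mem_add] at hz
      obtain ⟨a, ha, b, hb, rfl⟩ := hz
      show ⟪a + b, u⟫ ≤ ⟪x, u⟫ + ⟪y, u⟫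
      rw [inner_add_left]
      exact add_le_add (hubx a ha) (huby b hb)
  rw [supp, hg.csSup_eq, hsx, hsy]

lemma supp_smul_right (hK : IsCompact K) (hne : K.Nonempty) (hc : 0 ≤ c)
    (u : EuclideanSpace ℝ (Fin n)) : supp K (c • u) = c * supp K u := by
  rcases hc.eq_or_lt with h | h
  · rw [← h, zero_smul, supp_zero hne, zero_mul]
  · obtain ⟨x, hx, hsx, hub⟩ := supp_exists hK hne u
    have hg : IsGreatest ((fun y => ⟪y, c • u⟫) '' K) (c * ⟪x, u⟫) := by
      constructor
      · exact ⟨x, hx, real_inner_smul_right x u c⟩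
      · rintro _ ⟨y, hy, rfl⟩
        show ⟪y, c • u⟫ ≤ c * ⟪x, u⟫
        rw [real_inner_smul_right]
        exact mul_le_mul_of_nonneg_left (hub y hy) h.le
    rw [supp, hg.csSup_eq, hsx]

lemma supp_le_all (hA : IsCompact A) (hAne : A.Nonempty) (hB : IsCompact B) (hBne : B.Nonempty)
    (h : ∀ u : EuclideanSpace ℝ (Fin n), ‖u‖ = 1 → supp A u ≤ supp B u) :
    ∀ u, supp A u ≤ supp B u := by
  intro u
  rcases eq_or_ne u 0 with rfl | hu
  · rw [supp_zero hAne, supp_zero hBne]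
  · have hn0 : ‖u‖ ≠ 0 := norm_ne_zero_iff.mpr hu
    set w : EuclideanSpace ℝ (Fin n) := ‖u‖⁻¹ • u with hw
    have hwn : ‖w‖ = 1 := by
      rw [hw, norm_smul, norm_inv, norm_norm, inv_mul_cancel₀ hn0]
    have huw : u = ‖u‖ • w := (smul_inv_smul₀ hn0 u).symm
    rw [huw, supp_smul_right hA hAne (norm_nonneg u), supp_smul_right hB hBne (norm_nonneg u)]
    exact mul_le_mul_of_nonneg_left (h w hwn) (norm_nonneg u)

lemma subset_of_supp_le (hA : IsCompact A) (hB : Convex ℝ B) (hBc : IsClosed B)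
    (hBne : B.Nonempty) (h : ∀ u, supp A u ≤ supp B u) : A ⊆ B := by
  intro x hx
  by_contra hxB
  obtain ⟨f, r, hfr, hrx⟩ := geometric_hahn_banach_closed_point hB hBc hxB
  set v := (InnerProductSpace.toDual ℝ (EuclideanSpace ℝ (Fin n))).symm f with hv
  have hfv : ∀ y, ⟪v, y⟫ = f y := fun y => InnerProductSpace.toDual_symm_apply
  have h1 : supp B v ≤ r := by
    apply csSup_le (hBne.image _)
    rintro _ ⟨y, hy, rfl⟩
    show ⟪y, v⟫ ≤ r
    rw [real_inner_comm, hfv]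
    exact (hfr y hy).le
  have h2 : ⟪x, v⟫ ≤ supp A v := le_supp hA hx
  have h3 : f x = ⟪x, v⟫ := by rw [← hfv x, real_inner_comm]
  have := h v
  linarith

lemma eq_of_supp_eq_unit (hA : IsCompact A) (hAconv : Convex ℝ A) (hAne : A.Nonempty)
    (hB : IsCompact B) (hBconv : Convex ℝ B) (hBne : B.Nonempty)
    (h : ∀ u : EuclideanSpace ℝ (Fin n), ‖u‖ = 1 → supp A u = supp B u) : A = B := by
  apply Set.Subset.antisymm
  · exact subset_of_supp_le hA hBconv hB.isClosed hBne
      (supp_le_all hA hAne hB hBne fun u hu => (h u hu).le)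
  · exact subset_of_supp_le hB hAconv hA.isClosed hAne
      (supp_le_all hB hBne hA hAne fun u hu => (h u hu).ge)

end Helpers
section Helpers2

variable {n : ℕ} {K A B : Set (EuclideanSpace ℝ (Fin n))}
  {u : EuclideanSpace ℝ (Fin n)} {c : ℝ}

lemma IsConvexBodyO.body (hK : IsConvexBodyO K) : IsConvexBody K :=
  ⟨hK.1, hK.2.1, ⟨0, hK.2.2⟩⟩

lemma IsConvexBodyO.nonempty (hK : IsConvexBodyO K) : K.Nonempty :=
  ⟨0, interior_subset hK.2.2⟩

lemma IsConvexBodyO.zero_mem (hK : IsConvexBodyO K) : (0 : EuclideanSpace ℝ (Fin n)) ∈ K :=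
  interior_subset hK.2.2

lemma IsConvexBodyO.smul (hc : 0 < c) (hK : IsConvexBodyO K) : IsConvexBodyO (c • K) := by
  refine ⟨hK.1.smul c, hK.2.1.smul c, ?_⟩
  rw [interior_smul₀ hc.ne']
  have := Set.smul_mem_smul_set (a := c) hK.2.2
  rwa [smul_zero] at this

lemma IsConvexBodyO.add (hA : IsConvexBodyO A) (hB : IsConvexBodyO B) :
    IsConvexBodyO (A + B) := by
  refine ⟨hA.1.add hB.1, hA.2.1.add hB.2.1, ?_⟩
  have hopen : IsOpen (interior A + interior B) := (isOpen_interior (s := B)).add_left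
  have hsub : interior A + interior B ⊆ A + B :=
    Set.add_subset_add interior_subset interior_subset
  have h0 : (0 : EuclideanSpace ℝ (Fin n)) ∈ interior A + interior B := by
    have := Set.add_mem_add hA.2.2 hB.2.2
    rwa [add_zero] at this
  exact interior_maximal hsub hopen h0

lemma supp_pos (hK : IsConvexBodyO K) (hu : u ≠ 0) : 0 < supp K u := by
  have h1 : K ∈ nhds (0 : EuclideanSpace ℝ (Fin n)) := mem_interior_iff_mem_nhds.mp hK.2.2
  obtain ⟨ε, hε, hball⟩ := Metric.mem_nhds_iff.mp h1
  have hun : 0 < ‖u‖ := norm_pos_iff.mpr hu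
  have hx : (ε / 2 / ‖u‖) • u ∈ K := by
    apply hball
    rw [Metric.mem_ball, dist_zero_right, norm_smul, Real.norm_eq_abs,
      abs_of_nonneg (by positivity)]
    rw [div_mul_cancel₀ _ hun.ne']
    linarith
  have h2 : (0 : ℝ) < ⟪(ε / 2 / ‖u‖) • u, u⟫ := by
    rw [real_inner_smul_left, real_inner_self_eq_norm_sq]
    positivity
  exact h2.trans_le (le_supp hK.1 hx)

lemma holder_aux {p : ℝ} (hp : 1 < p) {s t x y : ℝ} (hs : 0 < s) (ht : 0 < t)
    (hst : s ^ (p / (p - 1)) + t ^ (p / (p - 1)) = 1) (hx : 0 ≤ x) (hy : 0 ≤ y) :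
    (s * x + t * y) ^ p ≤ x ^ p + y ^ p ∧
      ((s * x + t * y) ^ p = x ^ p + y ^ p →
        s ^ (1 - p / (p - 1)) * x = t ^ (1 - p / (p - 1)) * y) := by
  set q := p / (p - 1) with hq
  have hp1 : (0 : ℝ) < p - 1 := by linarith
  have hqpos : 0 < q := by positivity
  have hkey : q + (1 - q) * p = 0 := by
    rw [hq]; field_simp; ring
  set X := s ^ (1 - q) * x with hX
  set Y := t ^ (1 - q) * y with hY
  have hXnn : 0 ≤ X := mul_nonneg (Real.rpow_nonneg hs.le _) hx
  have hYnn : 0 ≤ Y := mul_nonneg (Real.rpow_nonneg ht.le _) hy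
  have hsq : 0 < s ^ q := Real.rpow_pos_of_pos hs q
  have htq : 0 < t ^ q := Real.rpow_pos_of_pos ht q
  have hXp : s ^ q * X ^ p = x ^ p := by
    rw [hX, Real.mul_rpow (Real.rpow_nonneg hs.le _) hx, ← Real.rpow_mul hs.le,
      ← mul_assoc, ← Real.rpow_add hs, hkey, Real.rpow_zero, one_mul]
  have hYp : t ^ q * Y ^ p = y ^ p := by
    rw [hY, Real.mul_rpow (Real.rpow_nonneg ht.le _) hy, ← Real.rpow_mul ht.le,
      ← mul_assoc, ← Real.rpow_add ht, hkey, Real.rpow_zero, one_mul]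
  have hcomb : s ^ q * X + t ^ q * Y = s * x + t * y := by
    rw [hX, hY, ← mul_assoc, ← mul_assoc, ← Real.rpow_add hs, ← Real.rpow_add ht]
    have : q + (1 - q) = 1 := by ring
    rw [this, Real.rpow_one, Real.rpow_one]
  have hconv := (strictConvexOn_rpow hp).convexOn.2 (Set.mem_Ici.mpr hXnn)
    (Set.mem_Ici.mpr hYnn) hsq.le htq.le hst
  simp only [smul_eq_mul] at hconv
  rw [hcomb, hXp, hYp] at hconv
  refine ⟨hconv, fun heq => ?_⟩
  by_contra hne
  have hstrict := (strictConvexOn_rpow hp).2 (Set.mem_Ici.mpr hXnn)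
    (Set.mem_Ici.mpr hYnn) hne hsq htq hst
  simp only [smul_eq_mul] at hstrict
  rw [hcomb, hXp, hYp] at hstrict
  exact absurd heq hstrict.ne

end Helpers2
/-- Equality part of Corollary 3.1.
If `F` is nonnegative, positively homogeneous, increasing and concave on convex bodies,
and moreover strictly increasing on convex bodies with the origin in their interiors,
`1 < p < ∞`, `K, L ∈ 𝒦ⁿₒ`, and `M = K +_p L`, then `F(M)^p = F(K)^p + F(L)^p`
holds if and only if `K` and `L` are dilates. -/
theorem lp_transference_sum_equality {n : ℕ} (hn : 1 ≤ n)
    (F : Set (EuclideanSpace ℝ (Fin n)) → ℝ)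
    (hF0 : ∀ K, IsConvexBody K → 0 ≤ F K)
    (hFhom : ∀ c : ℝ, 0 < c → ∀ K, IsConvexBody K → F (c • K) = c * F K)
    (hFmono : ∀ K L, IsConvexBody K → IsConvexBody L → K ⊆ L → F K ≤ F L)
    (hFconc : ∀ K L, IsConvexBody K → IsConvexBody L → ∀ α : ℝ, α ∈ Set.Ioo (0:ℝ) 1 →
      (1 - α) * F K + α * F L ≤ F ((1 - α) • K + α • L))
    (hFstrict : ∀ K L, IsConvexBodyO K → IsConvexBodyO L → K ⊂ L → F K < F L)
    (p : ℝ) (hp : 1 < p)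
    (K L M : Set (EuclideanSpace ℝ (Fin n)))
    (hK : IsConvexBodyO K) (hL : IsConvexBodyO L) (hM : IsConvexBodyO M)
    (hMsupp : ∀ u : EuclideanSpace ℝ (Fin n), ‖u‖ = 1 →
      supp M u ^ p = supp K u ^ p + supp L u ^ p) :
    F M ^ p = F K ^ p + F L ^ p ↔ ∃ c : ℝ, 0 < c ∧ K = c • L := by
  have hp0 : (0:ℝ) < p := by linarith
  have hp1 : (0:ℝ) < p - 1 := by linarith
  have hKb := hK.body
  have hLb := hL.body
  have hMb := hM.body
  -- a unit vector
  set u₀ : EuclideanSpace ℝ (Fin n) := EuclideanSpace.single (⟨0, hn⟩ : Fin n) (1:ℝ) with hu₀def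
  have hu₀ : ‖u₀‖ = 1 := by rw [hu₀def, EuclideanSpace.norm_single]; norm_num
  have hu₀ne : u₀ ≠ 0 := by
    intro h; rw [h, norm_zero] at hu₀; norm_num at hu₀
  -- positivity of F on bodies with 0 in interior
  have hFpos : ∀ J, IsConvexBodyO J → 0 < F J := by
    intro J hJ
    have h2 : IsConvexBodyO ((2⁻¹ : ℝ) • J) := hJ.smul (by norm_num)
    have hsub : (2⁻¹ : ℝ) • J ⊆ J := by
      rintro _ ⟨y, hy, rfl⟩
      exact hJ.2.1.smul_mem_of_zero_mem hJ.zero_mem hy (by constructor <;> norm_num)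
    have hne : (2⁻¹ : ℝ) • J ≠ J := by
      intro hEq
      have h3 := supp_smul (c := (2⁻¹:ℝ)) (by norm_num) hJ.1 hJ.nonempty u₀
      rw [hEq] at h3
      have hpos := supp_pos hJ hu₀ne
      nlinarith
    have hlt := hFstrict _ _ h2 hJ (Set.ssubset_iff_subset_ne.mpr ⟨hsub, hne⟩)
    have hhom := hFhom 2⁻¹ (by norm_num) J hJ.body
    rw [hhom] at hlt
    linarith
  -- superadditivity on positive combinations
  have hsuper : ∀ s t : ℝ, 0 < s → 0 < t → ∀ A B, IsConvexBodyO A → IsConvexBodyO B →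
      s * F A + t * F B ≤ F (s • A + t • B) := by
    intro s t hs ht A B hA hB
    have hstpos : 0 < s + t := by linarith
    set α := t / (s + t) with hα
    have hα1 : α ∈ Set.Ioo (0:ℝ) 1 := ⟨by positivity, by rw [hα, div_lt_one hstpos]; linarith⟩
    have h1α : 1 - α = s / (s + t) := by rw [hα]; field_simp; ring
    have e1 : (s + t) * (1 - α) = s := by rw [h1α]; field_simp
    have e2 : (s + t) * α = t := by rw [hα]; field_simp
    have hset : s • A + t • B = (s + t) • ((1 - α) • A + α • B) := by
      rw [smul_add, smul_smul, smul_smul, e1, e2]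
    have h1αpos : 0 < 1 - α := by rw [h1α]; positivity
    have hcomb : IsConvexBody ((1 - α) • A + α • B) :=
      ((hA.smul h1αpos).add (hB.smul hα1.1)).body
    calc s * F A + t * F B = (s + t) * ((1 - α) * F A + α * F B) := by
          rw [h1α, hα]; field_simp
      _ ≤ (s + t) * F ((1 - α) • A + α • B) :=
          mul_le_mul_of_nonneg_left (hFconc A B hA.body hB.body α hα1) hstpos.le
      _ = F ((s + t) • ((1 - α) • A + α • B)) := (hFhom _ hstpos _ hcomb).symm
      _ = F (s • A + t • B) := by rw [← hset]
  constructor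
  · -- equality implies dilates
    intro heq
    set q := p / (p - 1) with hq
    have hq0 : 0 < q := by positivity
    set a := F K with ha
    set b := F L with hb
    have hapos : 0 < a := hFpos K hK
    have hbpos : 0 < b := hFpos L hL
    have habp : 0 < a ^ p + b ^ p := by positivity
    set D := (a ^ p + b ^ p) ^ q⁻¹ with hD
    have hDpos : 0 < D := Real.rpow_pos_of_pos habp _
    set s := a ^ (p - 1) / D with hs
    set t := b ^ (p - 1) / D with ht
    have hspos : 0 < s := div_pos (Real.rpow_pos_of_pos hapos _) hDpos
    have htpos : 0 < t := div_pos (Real.rpow_pos_of_pos hbpos _) hDpos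
    have hDq : D ^ q = a ^ p + b ^ p := Real.rpow_inv_rpow habp.le hq0.ne'
    have hpq : (p - 1) * q = p := by rw [hq]; field_simp
    have hsq : s ^ q = a ^ p / (a ^ p + b ^ p) := by
      rw [hs, Real.div_rpow (Real.rpow_nonneg hapos.le _) hDpos.le,
        ← Real.rpow_mul hapos.le, hpq, hDq]
    have htq : t ^ q = b ^ p / (a ^ p + b ^ p) := by
      rw [ht, Real.div_rpow (Real.rpow_nonneg hbpos.le _) hDpos.le,
        ← Real.rpow_mul hbpos.le, hpq, hDq]
    have hst : s ^ q + t ^ q = 1 := by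
      rw [hsq, htq, ← add_div, div_self habp.ne']
    have hinvq : (1:ℝ) - q⁻¹ = p⁻¹ := by
      rw [hq, inv_div]; field_simp; ring
    have hsatb : s * a + t * b = (a ^ p + b ^ p) ^ p⁻¹ := by
      have h1 : s * a = a ^ p / D := by
        rw [hs, div_mul_eq_mul_div]
        congr 1
        calc a ^ (p - 1) * a = a ^ (p - 1) * a ^ (1:ℝ) := by rw [Real.rpow_one]
          _ = a ^ p := by rw [← Real.rpow_add hapos]; norm_num
      have h2 : t * b = b ^ p / D := by
        rw [ht, div_mul_eq_mul_div]
        congr 1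
        calc b ^ (p - 1) * b = b ^ (p - 1) * b ^ (1:ℝ) := by rw [Real.rpow_one]
          _ = b ^ p := by rw [← Real.rpow_add hbpos]; norm_num
      rw [h1, h2, ← add_div, hD]
      calc (a ^ p + b ^ p) / (a ^ p + b ^ p) ^ q⁻¹
          = (a ^ p + b ^ p) ^ (1:ℝ) / (a ^ p + b ^ p) ^ q⁻¹ := by rw [Real.rpow_one]
        _ = (a ^ p + b ^ p) ^ ((1:ℝ) - q⁻¹) := (Real.rpow_sub habp 1 q⁻¹).symm
        _ = (a ^ p + b ^ p) ^ p⁻¹ := by rw [hinvq]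
    have hFM : F M = (a ^ p + b ^ p) ^ p⁻¹ := by
      rw [← heq, Real.rpow_rpow_inv (hF0 M hMb) hp0.ne']
    set N := s • K + t • L with hN
    have hNO : IsConvexBodyO N := (hK.smul hspos).add (hL.smul htpos)
    have hsuppN : ∀ u, supp N u = s * supp K u + t * supp L u := by
      intro u
      rw [hN, supp_add (hK.1.smul s) ((hK.smul hspos).nonempty)
        (hL.1.smul t) ((hL.smul htpos).nonempty) u,
        supp_smul hspos hK.1 hK.nonempty, supp_smul htpos hL.1 hL.nonempty]
    have hNM : N ⊆ M := by
      apply subset_of_supp_le hNO.1 hM.2.1 hM.1.isClosed hM.nonempty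
      apply supp_le_all hNO.1 hNO.nonempty hM.1 hM.nonempty
      intro u hu
      have hxnn : 0 ≤ supp K u := supp_nonneg hK.1 hK.zero_mem
      have hynn : 0 ≤ supp L u := supp_nonneg hL.1 hL.zero_mem
      have hMnn : 0 ≤ supp M u := supp_nonneg hM.1 hM.zero_mem
      have hh := (holder_aux hp hspos htpos hst hxnn hynn).1
      rw [hsuppN u, ← Real.rpow_le_rpow_iff (by positivity) hMnn hp0, hMsupp u hu]
      exact hh
    have hFN : F M ≤ F N := by
      rw [hFM, ← hsatb]; exact hsuper s t hspos htpos K L hK hL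
    have hNeqM : N = M := by
      by_contra hne
      exact absurd (hFstrict N M hNO hM (Set.ssubset_iff_subset_ne.mpr ⟨hNM, hne⟩))
        (not_lt.mpr hFN)
    have hexp : (p - 1) * (1 - q) = -1 := by rw [hq]; field_simp; ring
    have hs1q : s ^ (1 - q) * a = (D ^ (1 - q))⁻¹ := by
      rw [hs, Real.div_rpow (Real.rpow_nonneg hapos.le _) hDpos.le,
        ← Real.rpow_mul hapos.le, hexp, Real.rpow_neg_one,
        div_mul_eq_mul_div, inv_mul_cancel₀ hapos.ne', one_div]
    have ht1q : t ^ (1 - q) * b = (D ^ (1 - q))⁻¹ := by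
      rw [ht, Real.div_rpow (Real.rpow_nonneg hbpos.le _) hDpos.le,
        ← Real.rpow_mul hbpos.le, hexp, Real.rpow_neg_one,
        div_mul_eq_mul_div, inv_mul_cancel₀ hbpos.ne', one_div]
    have hE2 : s ^ (1 - q) * a = t ^ (1 - q) * b := by rw [hs1q, ht1q]
    have hratio : ∀ u : EuclideanSpace ℝ (Fin n), ‖u‖ = 1 →
        b * supp K u = a * supp L u := by
      intro u hu
      have hxnn : 0 ≤ supp K u := supp_nonneg hK.1 hK.zero_mem
      have hynn : 0 ≤ supp L u := supp_nonneg hL.1 hL.zero_mem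
      have heq2 : (s * supp K u + t * supp L u) ^ p = supp K u ^ p + supp L u ^ p := by
        rw [← hsuppN u, hNeqM, hMsupp u hu]
      have hcase := (holder_aux hp hspos htpos hst hxnn hynn).2 heq2
      have hσ : 0 < s ^ (1 - q) := Real.rpow_pos_of_pos hspos _
      have key : s ^ (1 - q) * (b * supp K u) = s ^ (1 - q) * (a * supp L u) := by
        calc s ^ (1 - q) * (b * supp K u) = b * (s ^ (1 - q) * supp K u) := by ring
          _ = b * (t ^ (1 - q) * supp L u) := by rw [hcase]
          _ = supp L u * (t ^ (1 - q) * b) := by ring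
          _ = supp L u * (s ^ (1 - q) * a) := by rw [hE2]
          _ = s ^ (1 - q) * (a * supp L u) := by ring
      exact mul_left_cancel₀ hσ.ne' key
    have hcpos : 0 < a / b := div_pos hapos hbpos
    refine ⟨a / b, hcpos, ?_⟩
    have hcL := hL.smul hcpos
    apply eq_of_supp_eq_unit hK.1 hK.2.1 hK.nonempty hcL.1 hcL.2.1 hcL.nonempty
    intro u hu
    rw [supp_smul hcpos hL.1 hL.nonempty]
    have h3 := hratio u hu
    field_simp
    linarith
  · -- dilates imply equality
    rintro ⟨c, hc, hKL⟩
    subst hKL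
    have hcp : (0:ℝ) < c ^ p + 1 := by positivity
    set e := (c ^ p + 1) ^ p⁻¹ with he
    have hepos : 0 < e := Real.rpow_pos_of_pos hcp _
    have hsuppM : ∀ u : EuclideanSpace ℝ (Fin n), ‖u‖ = 1 → supp M u = supp (e • L) u := by
      intro u hu
      have h1 := hMsupp u hu
      rw [supp_smul hc hL.1 hL.nonempty] at h1
      have hynn : 0 ≤ supp L u := supp_nonneg hL.1 hL.zero_mem
      have hMnn : 0 ≤ supp M u := supp_nonneg hM.1 hM.zero_mem
      have h2 : supp M u ^ p = (e * supp L u) ^ p := by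
        rw [Real.mul_rpow hepos.le hynn, he, Real.rpow_inv_rpow hcp.le hp0.ne',
          h1, Real.mul_rpow hc.le hynn]
        ring
      calc supp M u = (supp M u ^ p) ^ p⁻¹ := (Real.rpow_rpow_inv hMnn hp0.ne').symm
        _ = ((e * supp L u) ^ p) ^ p⁻¹ := by rw [h2]
        _ = e * supp L u := Real.rpow_rpow_inv (mul_nonneg hepos.le hynn) hp0.ne'
        _ = supp (e • L) u := (supp_smul hepos hL.1 hL.nonempty u).symm
    have heL := hL.smul hepos
    have hMeq : M = e • L :=
      eq_of_supp_eq_unit hM.1 hM.2.1 hM.nonempty heL.1 heL.2.1 heL.nonempty hsuppM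
    rw [hMeq, hFhom e hepos L hLb, hFhom c hc L hLb]
    have hFLnn := hF0 L hLb
    rw [Real.mul_rpow hepos.le hFLnn, Real.mul_rpow hc.le hFLnn, he,
      Real.rpow_inv_rpow hcp.le hp0.ne']
    ring
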